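/- Let L be any n×n complex matrix with anti-Hermitian part Lᵃ = (L − L*)/2, let Γ be a density matrix on ℂⁿ, let γ be the orthogonal projection onto the first basis vector, and set α = tr((I−γ)Γ). Then |tr(γ·[Γ, Lᵃ])| ≤ 2‖L‖√α, where [Γ, Lᵃ] = ΓLᵃ − LᵃΓ. -/

import Mathlib

/-!
The `(0,0)` entry of `[Γ, M]` is `∑_{k ≠ 0} (Γ₀ₖ Mₖ₀ - M₀ₖ Γₖ₀)`, the `k = 0` terms cancelling.
By Cauchy–Schwarz, and since a column or a row of `M` has norm at most `‖M‖`, it is bounded by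
`2 ‖M‖ (∑_{k ≠ 0} |Γ₀ₖ|²)^{1/2}`. The `2 × 2` principal minors of `Γ ≥ 0` give
`|Γ₀ₖ|² ≤ Γ₀₀ Γₖₖ ≤ Γₖₖ`, so the sum is at most `∑_{k ≠ 0} Γₖₖ = α`. Finally `‖Lᵃ‖ ≤ ‖L‖`.
-/

open Matrix ComplexOrder

/-- The operator norm of a matrix induced by the Euclidean norm on `ℂⁿ`. -/
noncomputable def euclideanOpNorm {n : ℕ} (L : Matrix (Fin n) (Fin n) ℂ) : ℝ :=
  ‖Matrix.toEuclideanCLM (𝕜 := ℂ) L‖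

namespace Matrix

variable {m 𝕜 : Type*} [RCLike 𝕜]

lemma PosSemidef.norm_apply_sq_le {A : Matrix m m 𝕜} (hA : A.PosSemidef) (i j : m) :
    ‖A i j‖ ^ 2 ≤ RCLike.re (A i i) * RCLike.re (A j j) := by
  have hdet := (hA.submatrix ![i, j]).det_nonneg
  rw [det_fin_two] at hdet
  simp only [submatrix_apply, Matrix.cons_val_zero, Matrix.cons_val_one] at hdet
  rw [← hA.1.apply j i, RCLike.star_def, RCLike.mul_conj, ← hA.1.coe_re_apply_self i,
    ← hA.1.coe_re_apply_self j] at hdet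
  norm_cast at hdet
  simpa [sub_nonneg] using hdet

variable [Fintype m] [DecidableEq m]

lemma PosSemidef.sum_erase_norm_apply_sq_le {A : Matrix m m 𝕜} (hA : A.PosSemidef) (i : m) :
    ∑ k ∈ Finset.univ.erase i, ‖A i k‖ ^ 2 ≤
      RCLike.re (A i i) * ∑ k ∈ Finset.univ.erase i, RCLike.re (A k k) := by
  rw [Finset.mul_sum]
  exact Finset.sum_le_sum fun k _ => hA.norm_apply_sq_le i k

lemma PosSemidef.sum_erase_norm_apply_sq_le_one_sub {A : Matrix m m 𝕜} (hA : A.PosSemidef)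
    (htr : A.trace = 1) (i : m) :
    ∑ k ∈ Finset.univ.erase i, ‖A i k‖ ^ 2 ≤ 1 - RCLike.re (A i i) := by
  have hsum : RCLike.re (A i i) + ∑ k ∈ Finset.univ.erase i, RCLike.re (A k k) = 1 := by
    rw [Finset.add_sum_erase _ (fun k => RCLike.re (A k k)) (Finset.mem_univ i), ← map_sum,
      ← RCLike.one_re (K := 𝕜), ← htr]
    rfl
  have hrest : 0 ≤ ∑ k ∈ Finset.univ.erase i, RCLike.re (A k k) :=
    Finset.sum_nonneg fun k _ => (RCLike.nonneg_iff.mp hA.diag_nonneg).1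
  calc ∑ k ∈ Finset.univ.erase i, ‖A i k‖ ^ 2
      ≤ RCLike.re (A i i) * ∑ k ∈ Finset.univ.erase i, RCLike.re (A k k) :=
        hA.sum_erase_norm_apply_sq_le i
    _ ≤ ∑ k ∈ Finset.univ.erase i, RCLike.re (A k k) :=
        mul_le_of_le_one_left hrest (by linarith)
    _ = 1 - RCLike.re (A i i) := by linarith

lemma sum_norm_apply_sq_le_norm_toEuclideanCLM_sq (M : Matrix m m 𝕜) (s : Finset m) (j : m) :
    ∑ k ∈ s, ‖M k j‖ ^ 2 ≤ ‖toEuclideanCLM (𝕜 := 𝕜) M‖ ^ 2 := by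
  have hcol : toEuclideanCLM (𝕜 := 𝕜) M (EuclideanSpace.single j 1) =
      WithLp.toLp 2 (fun k => M k j) := by
    rw [EuclideanSpace.single, PiLp.single, toEuclideanCLM_toLp, mulVec_single_one]
    rfl
  have hle := (toEuclideanCLM (𝕜 := 𝕜) M).le_opNorm (EuclideanSpace.single j 1)
  rw [hcol, PiLp.norm_single, norm_one, mul_one] at hle
  calc ∑ k ∈ s, ‖M k j‖ ^ 2 ≤ ∑ k, ‖M k j‖ ^ 2 :=
        Finset.sum_le_univ_sum_of_nonneg fun _ => by positivity
    _ = ‖(WithLp.toLp 2 (fun k => M k j) : EuclideanSpace 𝕜 m)‖ ^ 2 := by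
        rw [EuclideanSpace.norm_sq_eq]
    _ ≤ ‖toEuclideanCLM (𝕜 := 𝕜) M‖ ^ 2 := by gcongr

lemma sum_norm_apply_sq_le_norm_toEuclideanCLM_sq' (M : Matrix m m 𝕜) (s : Finset m) (i : m) :
    ∑ k ∈ s, ‖M i k‖ ^ 2 ≤ ‖toEuclideanCLM (𝕜 := 𝕜) M‖ ^ 2 := by
  have h := sum_norm_apply_sq_le_norm_toEuclideanCLM_sq Mᴴ s i
  rw [← star_eq_conjTranspose, map_star,
    norm_star (E := EuclideanSpace 𝕜 m →L[𝕜] EuclideanSpace 𝕜 m)] at h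
  simpa using h

lemma norm_toEuclideanCLM_half_smul_sub_conjTranspose_le (L : Matrix m m 𝕜) :
    ‖toEuclideanCLM (𝕜 := 𝕜) (((1 : 𝕜) / 2) • (L - Lᴴ))‖ ≤ ‖toEuclideanCLM (𝕜 := 𝕜) L‖ := by
  set T := toEuclideanCLM (𝕜 := 𝕜) L
  rw [map_smul, map_sub, ← star_eq_conjTranspose, map_star, norm_smul]
  have hstar : ‖star T‖ = ‖T‖ := norm_star (E := EuclideanSpace 𝕜 m →L[𝕜] EuclideanSpace 𝕜 m) T
  have hhalf : ‖(1 : 𝕜) / 2‖ = 1 / 2 := by simp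
  have := norm_sub_le T (star T)
  rw [hhalf]
  linarith

lemma commutator_apply_self {R : Type*} [CommRing R] (A B : Matrix m m R) (i : m) :
    (A * B - B * A) i i = ∑ k ∈ Finset.univ.erase i, (A i k * B k i - B i k * A k i) := by
  rw [Finset.sum_erase _ (by ring), sub_apply, mul_apply, mul_apply, ← Finset.sum_sub_distrib]

lemma IsHermitian.norm_commutator_apply_self_le {A : Matrix m m 𝕜} (hA : A.IsHermitian)
    (M : Matrix m m 𝕜) (i : m) :
    ‖(A * M - M * A) i i‖ ≤
      2 * ‖toEuclideanCLM (𝕜 := 𝕜) M‖ * √(∑ k ∈ Finset.univ.erase i, ‖A i k‖ ^ 2) := by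
  set s := Finset.univ.erase i
  set T := toEuclideanCLM (𝕜 := 𝕜) M
  have cauchySchwarz (g : m → 𝕜) (hg : ∑ k ∈ s, ‖g k‖ ^ 2 ≤ ‖T‖ ^ 2) :
      ∑ k ∈ s, ‖A i k‖ * ‖g k‖ ≤ √(∑ k ∈ s, ‖A i k‖ ^ 2) * ‖T‖ :=
    (Real.sum_mul_le_sqrt_mul_sqrt _ _ _).trans <| mul_le_mul_of_nonneg_left
      ((Real.sqrt_le_sqrt hg).trans_eq (Real.sqrt_sq (norm_nonneg _))) (Real.sqrt_nonneg _)
  calc ‖(A * M - M * A) i i‖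
      ≤ ∑ k ∈ s, (‖A i k‖ * ‖M k i‖ + ‖A i k‖ * ‖M i k‖) := by
        rw [commutator_apply_self]
        refine norm_sum_le_of_le _ fun k _ => (norm_sub_le _ _).trans_eq ?_
        rw [norm_mul, norm_mul, ← hA.apply i k, norm_star, mul_comm ‖M i k‖]
    _ ≤ √(∑ k ∈ s, ‖A i k‖ ^ 2) * ‖T‖ + √(∑ k ∈ s, ‖A i k‖ ^ 2) * ‖T‖ := by
        rw [Finset.sum_add_distrib]
        exact add_le_add
          (cauchySchwarz _ (sum_norm_apply_sq_le_norm_toEuclideanCLM_sq M s i))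
          (cauchySchwarz _ (sum_norm_apply_sq_le_norm_toEuclideanCLM_sq' M s i))
    _ = 2 * ‖T‖ * √(∑ k ∈ s, ‖A i k‖ ^ 2) := by ring

end Matrix

theorem commutator_antihermitian_bound {n : ℕ} (L Γ : Matrix (Fin (n + 1)) (Fin (n + 1)) ℂ)
    (hΓ : Γ.PosSemidef) (hΓtr : Γ.trace = 1)
    (La : Matrix (Fin (n + 1)) (Fin (n + 1)) ℂ) (hLa : La = ((1 : ℂ) / 2) • (L - Lᴴ))
    (α : ℝ)
    (hα : α = ((1 - Matrix.single (0 : Fin (n + 1)) 0 (1 : ℂ)) * Γ).trace.re) :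
    ‖(Matrix.single (0 : Fin (n + 1)) 0 (1 : ℂ) *
        (Γ * La - La * Γ)).trace‖
      ≤ 2 * euclideanOpNorm L * Real.sqrt α := by
  have hα' : α = 1 - (Γ 0 0).re := by
    rw [hα, Matrix.sub_mul, Matrix.one_mul, trace_sub, trace_single_mul, one_smul, hΓtr]
    simp
  rw [trace_single_mul, one_smul]
  calc _ ≤ 2 * ‖toEuclideanCLM (𝕜 := ℂ) La‖ * √(∑ k ∈ Finset.univ.erase 0, ‖Γ 0 k‖ ^ 2) :=
        hΓ.1.norm_commutator_apply_self_le La 0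
    _ ≤ 2 * euclideanOpNorm L * √α := by
        rw [hLa, hα']
        gcongr
        · exact mul_nonneg zero_le_two (norm_nonneg _)
        · exact norm_toEuclideanCLM_half_smul_sub_conjTranspose_le L
        · exact hΓ.sum_erase_norm_apply_sq_le_one_sub hΓtr 0
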